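/- Let n, C be positive integers, let D ≥ 0 be an integer, and let T be a set of exactly 2C squares of the n×n board such that every square (x,y) ∈ T satisfies min(x−1, y−1, n−x, n−y) ≥ D, and such that every diagonal contains at most 2 squares of T. Then the sum of the lengths of the diagonals containing at least one square of T is at least C·n + 2·C·D plus half the sum of the lengths of the diagonals containing exactly one square of T. -/

import Mathlib

/-- The n×n board: squares (x,y) ∈ ℤ×ℤ with 1 ≤ x ≤ n and 1 ≤ y ≤ n. -/
noncomputable def board (n : ℕ) : Finset (ℤ × ℤ) := Finset.Icc 1 (n : ℤ) ×ˢ Finset.Icc 1 (n : ℤ)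

/-- A line of the board: a row (fixed y), a column (fixed x), a positive
diagonal (fixed x − y), or a negative diagonal (fixed x + y). -/
inductive Line : Type where
  | row : ℤ → Line
  | col : ℤ → Line
  | posDiag : ℤ → Line
  | negDiag : ℤ → Line
deriving DecidableEq

/-- The defining condition for a point to be on a given line. -/
def Line.pred : Line → ℤ × ℤ → Prop
  | .row b, p => p.2 = b
  | .col a, p => p.1 = a
  | .posDiag d, p => p.1 - p.2 = d
  | .negDiag s, p => p.1 + p.2 = s

instance (L : Line) (p : ℤ × ℤ) : Decidable (L.pred p) :=
  match L with
  | .row b => inferInstanceAs (Decidable (p.2 = b))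
  | .col a => inferInstanceAs (Decidable (p.1 = a))
  | .posDiag d => inferInstanceAs (Decidable (p.1 - p.2 = d))
  | .negDiag s => inferInstanceAs (Decidable (p.1 + p.2 = s))

/-- The set of squares of the n×n board lying on a line. -/
noncomputable def Line.squares (n : ℕ) (L : Line) : Finset (ℤ × ℤ) := (board n).filter L.pred

/-- The length of a line: its number of board squares. -/
noncomputable def Line.length (n : ℕ) (L : Line) : ℕ := (L.squares n).card

/-- Whether a line is a diagonal (of either orientation). -/
def Line.isDiag : Line → Prop
  | .posDiag _ => True
  | .negDiag _ => True
  | _ => False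

/-- The set of board squares attacked by a placement S of queens: squares q on
the board such that some queen p ∈ S with p ≠ q shares a row, column, or
diagonal with q. -/
noncomputable def attacked (n : ℕ) (S : Finset (ℤ × ℤ)) : Finset (ℤ × ℤ) :=
  S.biUnion fun p => (board n).filter fun q =>
    q ≠ p ∧ (p.1 = q.1 ∨ p.2 = q.2 ∨ p.1 - p.2 = q.1 - q.2 ∨ p.1 + p.2 = q.1 + q.2)

/-- G(m) = ⌊m²/12⌋ + 1 if m ≡ 3, 6, 9 (mod 12) or m = 10; ⌊m²/12⌋ otherwise. -/
def G (m : ℕ) : ℕ :=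
  if m % 12 = 3 ∨ m % 12 = 6 ∨ m % 12 = 9 ∨ m = 10 then m ^ 2 / 12 + 1 else m ^ 2 / 12

/-- The set of diagonals (of either orientation) containing at least one
square of T. -/
def diagsThrough (T : Finset (ℤ × ℤ)) : Finset Line :=
  T.image (fun p => Line.posDiag (p.1 - p.2)) ∪
    T.image (fun p => Line.negDiag (p.1 + p.2))

/-!
The positive and negative diagonals through `(x, y)` have lengths `n - |x - y|` and
`n - |x + y - n - 1|`, so for a square at distance at least `D` from every side they have total
length at least `n + 2D`. Summing this over the `2C` squares of `T` counts every diagonal through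
`T` once for each of its squares in `T`, that is once or twice; hence twice the total length minus
the lengths of the diagonals met only once is at least `2C(n + 2D)`.
-/

open Finset

namespace Line

theorem squares_posDiag (n : ℕ) (d : ℤ) :
    (posDiag d).squares n = (Icc (max 1 (1 + d)) (min n (n + d))).image fun x => (x, x - d) := by
  ext ⟨x, y⟩
  simp only [squares, board, pred, mem_filter, mem_product, mem_Icc, mem_image, Prod.mk.injEq]
  constructor
  · rintro ⟨⟨⟨hx1, hxn⟩, hy1, hyn⟩, rfl⟩
    exact ⟨x, ⟨by omega, by omega⟩, rfl, by omega⟩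
  · rintro ⟨x, ⟨hlo, hhi⟩, rfl, rfl⟩
    omega

theorem squares_negDiag (n : ℕ) (s : ℤ) :
    (negDiag s).squares n = (Icc (max 1 (s - n)) (min n (s - 1))).image fun x => (x, s - x) := by
  ext ⟨x, y⟩
  simp only [squares, board, pred, mem_filter, mem_product, mem_Icc, mem_image, Prod.mk.injEq]
  constructor
  · rintro ⟨⟨⟨hx1, hxn⟩, hy1, hyn⟩, rfl⟩
    exact ⟨x, ⟨by omega, by omega⟩, rfl, by omega⟩
  · rintro ⟨x, ⟨hlo, hhi⟩, rfl, rfl⟩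
    omega

theorem length_posDiag (n : ℕ) (d : ℤ) : (posDiag d).length n = (n - |d|).toNat := by
  rw [length, squares_posDiag, card_image_of_injective _ fun a b h => (Prod.mk.inj h).1,
    Int.card_Icc]
  rcases abs_cases d with ⟨h, _⟩ | ⟨h, _⟩ <;> omega

theorem length_negDiag (n : ℕ) (s : ℤ) : (negDiag s).length n = (n - |s - n - 1|).toNat := by
  rw [length, squares_negDiag, card_image_of_injective _ fun a b h => (Prod.mk.inj h).1,
    Int.card_Icc]
  rcases abs_cases (s - n - 1) with ⟨h, _⟩ | ⟨h, _⟩ <;> omega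

end Line

theorem length_posDiag_add_length_negDiag_ge (n D : ℕ) (p : ℤ × ℤ)
    (hp : (D : ℤ) ≤ min (p.1 - 1) (min (p.2 - 1) (min ((n : ℤ) - p.1) ((n : ℤ) - p.2)))) :
    n + 2 * D ≤ (Line.posDiag (p.1 - p.2)).length n + (Line.negDiag (p.1 + p.2)).length n := by
  simp only [le_min_iff] at hp
  rw [Line.length_posDiag, Line.length_negDiag]
  rcases abs_cases (p.1 - p.2) with ⟨h, _⟩ | ⟨h, _⟩ <;>
    rcases abs_cases (p.1 + p.2 - n - 1) with ⟨h', _⟩ | ⟨h', _⟩ <;> omega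

theorem filter_pred_diagsThrough {T : Finset (ℤ × ℤ)} {p : ℤ × ℤ} (hp : p ∈ T) :
    (diagsThrough T).filter (·.pred p) = {Line.posDiag (p.1 - p.2), Line.negDiag (p.1 + p.2)} := by
  ext L
  simp only [diagsThrough, mem_filter, mem_union, mem_image, mem_insert, mem_singleton]
  constructor
  · rintro ⟨⟨q, -, rfl⟩ | ⟨q, -, rfl⟩, hpq⟩ <;> simp only [Line.pred] at hpq <;> simp [hpq]
  · rintro (rfl | rfl)
    · exact ⟨.inl ⟨p, hp, rfl⟩, rfl⟩
    · exact ⟨.inr ⟨p, hp, rfl⟩, rfl⟩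

theorem sum_diagsThrough_card_smul {M : Type*} [AddCommMonoid M] (T : Finset (ℤ × ℤ))
    (f : Line → M) :
    ∑ L ∈ diagsThrough T, #(T.filter L.pred) • f L =
      ∑ p ∈ T, (f (Line.posDiag (p.1 - p.2)) + f (Line.negDiag (p.1 + p.2))) := by
  simp_rw [← sum_const, sum_filter]
  rw [sum_comm]
  refine sum_congr rfl fun p hp => ?_
  rw [← sum_filter, filter_pred_diagsThrough hp, sum_pair (by simp)]

theorem card_filter_pred_pos_of_mem_diagsThrough {T : Finset (ℤ × ℤ)} {L : Line}
    (hL : L ∈ diagsThrough T) : 0 < #(T.filter L.pred) := by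
  simp only [diagsThrough, mem_union, mem_image] at hL
  obtain ⟨q, hq, rfl⟩ | ⟨q, hq, rfl⟩ := hL <;> exact card_pos.2 ⟨q, mem_filter.2 ⟨hq, rfl⟩⟩

theorem isDiag_of_mem_diagsThrough {T : Finset (ℤ × ℤ)} {L : Line} (hL : L ∈ diagsThrough T) :
    L.isDiag := by
  simp only [diagsThrough, mem_union, mem_image] at hL
  obtain ⟨q, -, rfl⟩ | ⟨q, -, rfl⟩ := hL <;> trivial

theorem sum_diagsThrough_card_mul_of_card_le_two {R : Type*} [CommRing R] {T : Finset (ℤ × ℤ)}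
    (htwo : ∀ L : Line, L.isDiag → #(T.filter L.pred) ≤ 2) (f : Line → R) :
    ∑ L ∈ diagsThrough T, (#(T.filter L.pred) : R) * f L =
      2 * ∑ L ∈ diagsThrough T, f L -
        ∑ L ∈ (diagsThrough T).filter (fun L => #(T.filter L.pred) = 1), f L := by
  rw [sum_filter, mul_sum, ← sum_sub_distrib]
  refine sum_congr rfl fun L hL => ?_
  have hpos := card_filter_pred_pos_of_mem_diagsThrough hL
  have hle := htwo L (isDiag_of_mem_diagsThrough hL)
  obtain h | h : #(T.filter L.pred) = 1 ∨ #(T.filter L.pred) = 2 := by omega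
  · simp only [h, if_true, Nat.cast_one]
    ring
  · simp only [h, OfNat.ofNat_ne_one, if_false, Nat.cast_ofNat, sub_zero]

theorem critical_ring_diagonal_length_bound_general (n C D : ℕ)
    (T : Finset (ℤ × ℤ)) (hTcard : T.card = 2 * C)
    (hdist : ∀ p ∈ T, (D : ℤ) ≤ min (p.1 - 1) (min (p.2 - 1)
      (min ((n : ℤ) - p.1) ((n : ℤ) - p.2))))
    (htwo : ∀ L : Line, L.isDiag → (T.filter L.pred).card ≤ 2) :
    (C : ℚ) * n + 2 * C * D +
        (∑ L ∈ (diagsThrough T).filter (fun L => (T.filter L.pred).card = 1),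
          (L.length n : ℚ)) / 2
      ≤ ∑ L ∈ diagsThrough T, (L.length n : ℚ) := by
  have hdouble : 2 * C * ((n : ℚ) + 2 * D) ≤
      ∑ L ∈ diagsThrough T, (#(T.filter L.pred) : ℚ) * L.length n :=
    calc 2 * C * ((n : ℚ) + 2 * D) = ∑ _p ∈ T, ((n : ℚ) + 2 * D) := by
          rw [sum_const, hTcard]; ring
      _ ≤ ∑ p ∈ T, (((Line.posDiag (p.1 - p.2)).length n : ℚ) +
            (Line.negDiag (p.1 + p.2)).length n) :=
          sum_le_sum fun p hp => mod_cast length_posDiag_add_length_negDiag_ge n D p (hdist p hp)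
      _ = ∑ L ∈ diagsThrough T, #(T.filter L.pred) • (L.length n : ℚ) :=
          (sum_diagsThrough_card_smul T fun L => (L.length n : ℚ)).symm
      _ = _ := by simp only [nsmul_eq_mul]
  rw [sum_diagsThrough_card_mul_of_card_le_two htwo] at hdouble
  linarith

/-- If T consists of 2C board squares, each at distance at least
D from every side of the board, and every diagonal contains at most 2 squares
of T, then the sum of the lengths of the diagonals through squares of T is at
least C·n + 2·C·D plus half the sum of the lengths of the diagonals containing
exactly one square of T. -/
theorem critical_ring_diagonal_length_bound (n C D : ℕ) (hn : 0 < n) (hC : 0 < C)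
    (T : Finset (ℤ × ℤ)) (hT : T ⊆ board n) (hTcard : T.card = 2 * C)
    (hdist : ∀ p ∈ T, (D : ℤ) ≤ min (p.1 - 1) (min (p.2 - 1)
      (min ((n : ℤ) - p.1) ((n : ℤ) - p.2))))
    (htwo : ∀ L : Line, L.isDiag → (T.filter L.pred).card ≤ 2) :
    (C : ℚ) * n + 2 * C * D +
        (∑ L ∈ (diagsThrough T).filter (fun L => (T.filter L.pred).card = 1),
          (L.length n : ℚ)) / 2
      ≤ ∑ L ∈ diagsThrough T, (L.length n : ℚ) :=
  critical_ring_diagonal_length_bound_general n C D T hTcard hdist htwo
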